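/- Let R be a finite local reflexive ring with Jacobson radical J = J(R) and residue field F = R/J a prime field (isomorphic to ZMod p for some prime p). Suppose the dimension of J²/J³ as an F-vector space is at most 2 and J⁴ = 0. Then R is semicommutative. -/

import Mathlib

open Pointwise

/-- A ring is reflexive if `aRb = 0` implies `bRa = 0`. -/
def IsReflexiveRing (R : Type*) [Ring R] : Prop :=
  ∀ a b : R, (∀ r : R, a * r * b = 0) → (∀ r : R, b * r * a = 0)

/-- A ring is semicommutative if `a*b = 0` implies `aRb = 0`. -/
def IsSemicommutativeRing (R : Type*) [Ring R] : Prop :=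
  ∀ a b : R, a * b = 0 → ∀ r : R, a * r * b = 0

/-- The `i`-th power of the Jacobson radical, as an additive subgroup: the additive
closure of the set of products of `i` elements of the Jacobson radical. -/
def jacobsonPow (R : Type*) [Ring R] (i : ℕ) : AddSubgroup R :=
  AddSubgroup.closure (((Ideal.jacobson (⊥ : Ideal R) : Ideal R) : Set R) ^ i)

/-- For a finite local ring with residue field of prime order `p`, the dimension of
`Jⁱ/J^(i+1)` over the residue field is `d` iff the index of `J^(i+1)` in `Jⁱ` is `p ^ d`. -/
def jacobsonFactorDim (R : Type*) [Ring R] (p i d : ℕ) : Prop :=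
  (jacobsonPow R (i + 1)).relIndex (jacobsonPow R i) = p ^ d

/-!
For `a, b ∈ J` with `a * b = 0` it suffices to show `a * c * b = 0` for `c ∈ J`, since
`R = ℤ + J` and integers are central; elements outside `J` are units, for which the claim is
trivial.
Reflexivity turns a vanishing product `u * v` with `u J v ⊆ J⁴ = 0` into `v * u = 0`; in
particular `b J a = 0`. If `a * c * b ≠ 0`, then also `b * a * c ≠ 0`, and multiplying on the
right by `b` and by `c` shows that `b * a` and `a * c` are independent in `J² / J³`, a space of
dimension at most 2, so they form a basis. Expanding `c * a` in this basis and multiplying on the left by `b` and by `a` gives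
`a * c * a = 0`, hence `a * (a * c) = 0`; expanding `c * b` and multiplying by `a` then gives
`a * c * b = 0`.
-/

theorem exists_smul_add_smul_eq_of_card_le {K Q : Type*} [Ring K] [Finite K] [AddCommGroup Q]
    [Module K Q] [Finite Q] (hcard : Nat.card Q ≤ Nat.card K ^ 2) {v w : Q}
    (hind : ∀ i j : K, i • v + j • w = 0 → i = 0 ∧ j = 0) (x : Q) :
    ∃ i j : K, i • v + j • w = x := by
  let g : K × K → Q := fun ij => ij.1 • v + ij.2 • w
  have hg : Function.Injective g := by
    rintro ⟨i, j⟩ ⟨i', j'⟩ h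
    obtain ⟨hi, hj⟩ := hind (i - i') (j - j') <| by
      rw [sub_smul, sub_smul, sub_add_sub_comm, sub_eq_zero]; exact h
    exact Prod.ext (sub_eq_zero.1 hi) (sub_eq_zero.1 hj)
  obtain ⟨⟨i, j⟩, hij⟩ := (hg.bijective_of_nat_card_le (by rwa [Nat.card_prod, ← sq])).2 x
  exact ⟨i, j, hij⟩

theorem AddSubgroup.exists_nsmul_add_nsmul_sub_mem {A : Type*} [AddCommGroup A]
    {H K : AddSubgroup A} {p d : ℕ} [NeZero p] (hpK : ∀ x ∈ K, p • x ∈ H)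
    (hindex : H.relIndex K = p ^ d) (hd : d ≤ 2) {v w : A} (hv : v ∈ K) (hw : w ∈ K)
    (hind : ∀ m n : ℕ, m • v + n • w ∈ H → p ∣ m ∧ p ∣ n) {x : A} (hx : x ∈ K) :
    ∃ m n : ℕ, x - (m • v + n • w) ∈ H := by
  let π : K →+ K ⧸ H.addSubgroupOf K := QuotientAddGroup.mk' _
  have hπ (y : K) : π y = 0 ↔ (y : A) ∈ H :=
    (QuotientAddGroup.eq_zero_iff y).trans AddSubgroup.mem_addSubgroupOf
  let : Module (ZMod p) (K ⧸ H.addSubgroupOf K) :=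
    QuotientAddGroup.zmodModule fun y =>
      AddSubgroup.mem_addSubgroupOf.2 (by simpa using hpK y y.2)
  have hval (i : ZMod p) (q : K ⧸ H.addSubgroupOf K) : i • q = i.val • q := by
    rw [← Nat.cast_smul_eq_nsmul (ZMod p), ZMod.natCast_zmod_val]
  have hQ : Nat.card (K ⧸ H.addSubgroupOf K) = p ^ d := hindex
  have : Finite (K ⧸ H.addSubgroupOf K) :=
    Nat.finite_of_card_ne_zero (hQ ▸ pow_ne_zero d (NeZero.ne p))
  have hcard : Nat.card (K ⧸ H.addSubgroupOf K) ≤ Nat.card (ZMod p) ^ 2 := by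
    rw [hQ, Nat.card_zmod]; exact Nat.pow_le_pow_right (NeZero.pos p) hd
  have hind' (i j : ZMod p) (h : i • π ⟨v, hv⟩ + j • π ⟨w, hw⟩ = 0) : i = 0 ∧ j = 0 := by
    rw [hval, hval, ← map_nsmul, ← map_nsmul, ← map_add, hπ] at h
    obtain ⟨hi, hj⟩ := hind _ _ (by simpa using h)
    rw [← ZMod.natCast_zmod_val i, ← ZMod.natCast_zmod_val j]
    exact ⟨(ZMod.natCast_eq_zero_iff _ _).2 hi, (ZMod.natCast_eq_zero_iff _ _).2 hj⟩
  obtain ⟨i, j, hij⟩ := exists_smul_add_smul_eq_of_card_le hcard hind' (π ⟨x, hx⟩)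
  refine ⟨i.val, j.val, ?_⟩
  have := (hπ (⟨x, hx⟩ - (i.val • ⟨v, hv⟩ + j.val • ⟨w, hw⟩))).1 <| by
    rw [map_sub, map_add, map_nsmul, map_nsmul, ← hval, ← hval, hij, sub_self]
  simpa using this

section JacobsonPow

variable {R : Type*} [Ring R]

theorem mem_jacobsonPow_one {x : R} (hx : x ∈ (⊥ : Ideal R).jacobson) : x ∈ jacobsonPow R 1 :=
  AddSubgroup.subset_closure (by rwa [pow_one])

theorem mul_mem_jacobsonPow_succ_left {x z : R} {n : ℕ} (hx : x ∈ (⊥ : Ideal R).jacobson)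
    (hz : z ∈ jacobsonPow R n) : x * z ∈ jacobsonPow R (n + 1) := by
  induction hz using AddSubgroup.closure_induction with
  | mem y hy => exact AddSubgroup.subset_closure (by rw [pow_succ']; exact Set.mul_mem_mul hx hy)
  | zero => rw [mul_zero]; exact zero_mem _
  | add y z _ _ hy hz => rw [mul_add]; exact add_mem hy hz
  | neg y _ hy => rw [mul_neg]; exact neg_mem hy

theorem mul_mem_jacobsonPow_succ_right {x z : R} {n : ℕ} (hx : x ∈ (⊥ : Ideal R).jacobson)
    (hz : z ∈ jacobsonPow R n) : z * x ∈ jacobsonPow R (n + 1) := by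
  induction hz using AddSubgroup.closure_induction with
  | mem y hy => exact AddSubgroup.subset_closure (by rw [pow_succ]; exact Set.mul_mem_mul hy hx)
  | zero => rw [zero_mul]; exact zero_mem _
  | add y z _ _ hy hz => rw [add_mul]; exact add_mem hy hz
  | neg y _ hy => rw [neg_mul]; exact neg_mem hy

theorem mul_mem_jacobsonPow_two {x y : R} (hx : x ∈ (⊥ : Ideal R).jacobson)
    (hy : y ∈ (⊥ : Ideal R).jacobson) : x * y ∈ jacobsonPow R 2 :=
  mul_mem_jacobsonPow_succ_right hy (mem_jacobsonPow_one hx)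

theorem mul_mem_jacobsonPow_three {x y z : R} (hx : x ∈ (⊥ : Ideal R).jacobson)
    (hy : y ∈ (⊥ : Ideal R).jacobson) (hz : z ∈ (⊥ : Ideal R).jacobson) :
    x * y * z ∈ jacobsonPow R 3 :=
  mul_mem_jacobsonPow_succ_right hz (mul_mem_jacobsonPow_two hx hy)

theorem mul_eq_zero_of_mem_jacobsonPow_left {n : ℕ} (hJ : jacobsonPow R (n + 1) = ⊥) {x z : R}
    (hx : x ∈ (⊥ : Ideal R).jacobson) (hz : z ∈ jacobsonPow R n) : x * z = 0 := by
  simpa [hJ] using mul_mem_jacobsonPow_succ_left hx hz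

theorem mul_eq_zero_of_mem_jacobsonPow_right {n : ℕ} (hJ : jacobsonPow R (n + 1) = ⊥) {x z : R}
    (hx : x ∈ (⊥ : Ideal R).jacobson) (hz : z ∈ jacobsonPow R n) : z * x = 0 := by
  simpa [hJ] using mul_mem_jacobsonPow_succ_right hx hz

theorem mul_eq_mul_of_sub_mem_jacobsonPow {n : ℕ} (hJ : jacobsonPow R (n + 1) = ⊥) {x y y' : R}
    (hx : x ∈ (⊥ : Ideal R).jacobson) (hy : y - y' ∈ jacobsonPow R n) : x * y = x * y' := by
  rw [← sub_eq_zero, ← mul_sub]; exact mul_eq_zero_of_mem_jacobsonPow_left hJ hx hy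

end JacobsonPow

section ResidueField

variable {R : Type*} [Ring R] {p : ℕ} {f : R →+* ZMod p}

theorem natCast_mem_jacobson_of_ker_eq (hker : RingHom.ker f = (⊥ : Ideal R).jacobson) :
    (p : R) ∈ (⊥ : Ideal R).jacobson :=
  hker ▸ RingHom.mem_ker.2 (by simp)

theorem nsmul_mem_jacobsonPow_succ (hker : RingHom.ker f = (⊥ : Ideal R).jacobson) {n : ℕ}
    {z : R} (hz : z ∈ jacobsonPow R n) : p • z ∈ jacobsonPow R (n + 1) := by
  rw [nsmul_eq_mul]; exact mul_mem_jacobsonPow_succ_left (natCast_mem_jacobson_of_ker_eq hker) hz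

theorem exists_natCast_sub_mem_jacobson [NeZero p] (hker : RingHom.ker f = (⊥ : Ideal R).jacobson)
    (r : R) : ∃ n : ℕ, r - n ∈ (⊥ : Ideal R).jacobson :=
  ⟨(f r).val, hker ▸ RingHom.mem_ker.2 (by simp)⟩

theorem mul_mul_eq_zero_of_forall_mem_jacobson [NeZero p]
    (hker : RingHom.ker f = (⊥ : Ideal R).jacobson) {a b : R} (hab : a * b = 0)
    (h : ∀ c ∈ (⊥ : Ideal R).jacobson, a * c * b = 0) (r : R) : a * r * b = 0 := by
  obtain ⟨n, hn⟩ := exists_natCast_sub_mem_jacobson hker r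
  have := h _ hn
  rwa [mul_sub, sub_mul, ← Nat.cast_comm, mul_assoc (n : R), hab, mul_zero, sub_zero] at this

end ResidueField

theorem isUnit_of_notMem_jacobson {R : Type*} [Ring R] [IsLocalRing R] [Finite R] {x : R}
    (hx : x ∉ (⊥ : Ideal R).jacobson) : IsUnit x := by
  obtain ⟨y, hy⟩ : ∃ y, ¬IsUnit (1 + y * x) := by
    contrapose! hx
    refine Ideal.mem_jacobson_iff.2 fun y => ?_
    obtain ⟨z, hz⟩ := (hx y).exists_left_inv
    exact ⟨z, by rw [Ideal.mem_bot, ← hz]; noncomm_ring⟩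
  have hyx :=
    (IsLocalRing.isUnit_or_isUnit_of_add_one (add_neg_cancel_right 1 (y * x))).resolve_left hy
  exact isUnit_of_mul_isUnit_right ((IsUnit.neg_iff _).1 hyx)

section Reflexive

variable {R : Type*} [Ring R] {p : ℕ} {f : R →+* ZMod p}

theorem IsReflexiveRing.mul_eq_zero_of_forall_mem_jacobson (href : IsReflexiveRing R) [NeZero p]
    (hker : RingHom.ker f = (⊥ : Ideal R).jacobson) {a b : R} (hab : a * b = 0)
    (h : ∀ c ∈ (⊥ : Ideal R).jacobson, a * c * b = 0) : b * a = 0 := by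
  simpa using href a b (mul_mul_eq_zero_of_forall_mem_jacobson hker hab h) 1

theorem IsReflexiveRing.mul_eq_zero_comm_of_mem_jacobsonPow_two (href : IsReflexiveRing R)
    [NeZero p] (hker : RingHom.ker f = (⊥ : Ideal R).jacobson) (hJ4 : jacobsonPow R 4 = ⊥)
    {u v : R} (hu : u ∈ jacobsonPow R 2) (hv : v ∈ (⊥ : Ideal R).jacobson) (huv : u * v = 0) :
    v * u = 0 :=
  href.mul_eq_zero_of_forall_mem_jacobson hker huv fun _ hc =>
    mul_eq_zero_of_mem_jacobsonPow_right hJ4 hv (mul_mem_jacobsonPow_succ_right hc hu)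

theorem IsReflexiveRing.mul_mul_eq_zero_of_mul_eq_zero (href : IsReflexiveRing R) [NeZero p]
    (hker : RingHom.ker f = (⊥ : Ideal R).jacobson) (hJ4 : jacobsonPow R 4 = ⊥) {a b x : R}
    (ha : a ∈ (⊥ : Ideal R).jacobson) (hb : b ∈ (⊥ : Ideal R).jacobson)
    (hx : x ∈ (⊥ : Ideal R).jacobson) (hab : a * b = 0) : b * x * a = 0 := by
  rw [mul_assoc]
  exact href.mul_eq_zero_comm_of_mem_jacobsonPow_two hker hJ4 (mul_mem_jacobsonPow_two hx ha) hb
    (by rw [mul_assoc, hab, mul_zero])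

theorem dvd_of_nsmul_eq_zero_of_mem_jacobsonPow_three [Fact p.Prime]
    (hker : RingHom.ker f = (⊥ : Ideal R).jacobson) (hJ4 : jacobsonPow R 4 = ⊥) {z : R}
    (hz : z ∈ jacobsonPow R 3) (hz0 : z ≠ 0) {n : ℕ} (h : n • z = 0) : p ∣ n :=
  addOrderOf_eq_prime (by simpa [hJ4] using nsmul_mem_jacobsonPow_succ hker hz) hz0 ▸
    addOrderOf_dvd_of_nsmul_eq_zero h

theorem dvd_and_dvd_of_nsmul_add_nsmul_mem_jacobsonPow_three [Fact p.Prime]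
    (hker : RingHom.ker f = (⊥ : Ideal R).jacobson) (hJ4 : jacobsonPow R 4 = ⊥) {a b c : R}
    (ha : a ∈ (⊥ : Ideal R).jacobson) (hb : b ∈ (⊥ : Ideal R).jacobson)
    (hc : c ∈ (⊥ : Ideal R).jacobson) (hab : a * b = 0) (hacb : a * c * b ≠ 0)
    (hbac : b * a * c ≠ 0) {m n : ℕ} (h : m • (b * a) + n • (a * c) ∈ jacobsonPow R 3) :
    p ∣ m ∧ p ∣ n := by
  have hn : p ∣ n := by
    have := mul_eq_zero_of_mem_jacobsonPow_right hJ4 hb h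
    rw [add_mul, smul_mul_assoc, smul_mul_assoc, mul_assoc b, hab, mul_zero, smul_zero,
      zero_add] at this
    exact dvd_of_nsmul_eq_zero_of_mem_jacobsonPow_three hker hJ4
      (mul_mem_jacobsonPow_three ha hc hb) hacb this
  obtain ⟨k, rfl⟩ := hn
  have hm : m • (b * a) ∈ jacobsonPow R 3 := by
    have hn : (p * k) • (a * c) ∈ jacobsonPow R 3 := by
      rw [mul_comm, mul_nsmul]
      exact nsmul_mem_jacobsonPow_succ hker (nsmul_mem (mul_mem_jacobsonPow_two ha hc) k)
    simpa using sub_mem h hn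
  have := mul_eq_zero_of_mem_jacobsonPow_right hJ4 hc hm
  rw [smul_mul_assoc] at this
  exact ⟨dvd_of_nsmul_eq_zero_of_mem_jacobsonPow_three hker hJ4
    (mul_mem_jacobsonPow_three hb ha hc) hbac this, dvd_mul_right p k⟩

end Reflexive

theorem IsReflexiveRing.mul_mul_eq_zero_of_mem_jacobson {R : Type*} [Ring R] {p : ℕ}
    [Fact p.Prime] {f : R →+* ZMod p} (href : IsReflexiveRing R)
    (hker : RingHom.ker f = (⊥ : Ideal R).jacobson) (h2 : ∃ d ≤ 2, jacobsonFactorDim R p 2 d)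
    (hJ4 : jacobsonPow R 4 = ⊥) {a b c : R} (ha : a ∈ (⊥ : Ideal R).jacobson)
    (hb : b ∈ (⊥ : Ideal R).jacobson) (hc : c ∈ (⊥ : Ideal R).jacobson) (hab : a * b = 0) :
    a * c * b = 0 := by
  by_contra hacb
  have hbJa (x : R) (hx : x ∈ (⊥ : Ideal R).jacobson) : b * x * a = 0 :=
    href.mul_mul_eq_zero_of_mul_eq_zero hker hJ4 ha hb hx hab
  have hbac : b * a * c ≠ 0 := fun h => hacb <|
    href.mul_eq_zero_of_forall_mem_jacobson (a := b) hker (by rwa [← mul_assoc]) fun x hx => by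
      rw [← mul_assoc, hbJa x hx, zero_mul]
  obtain ⟨d, hd, hindex⟩ := h2
  have hspan {x : R} (hx : x ∈ jacobsonPow R 2) :
      ∃ m n : ℕ, x - (m • (b * a) + n • (a * c)) ∈ jacobsonPow R 3 :=
    AddSubgroup.exists_nsmul_add_nsmul_sub_mem (fun _ hy => nsmul_mem_jacobsonPow_succ hker hy)
      hindex hd (mul_mem_jacobsonPow_two hb ha) (mul_mem_jacobsonPow_two ha hc)
      (fun _ _ => dvd_and_dvd_of_nsmul_add_nsmul_mem_jacobsonPow_three hker hJ4 ha hb hc hab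
        hacb hbac) hx
  have haac : a * (a * c) = 0 := by
    obtain ⟨m, n, hca⟩ := hspan (mul_mem_jacobsonPow_two hc ha)
    have hbca := mul_eq_mul_of_sub_mem_jacobsonPow hJ4 hb hca
    have haca := mul_eq_mul_of_sub_mem_jacobsonPow hJ4 ha hca
    rw [← mul_assoc, hbJa c hc, mul_add, mul_smul_comm, mul_smul_comm, ← mul_assoc b b,
      hbJa b hb, smul_zero, zero_add, ← mul_assoc] at hbca
    obtain ⟨k, rfl⟩ := dvd_of_nsmul_eq_zero_of_mem_jacobsonPow_three hker hJ4
      (mul_mem_jacobsonPow_three hb ha hc) hbac hbca.symm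
    have hpaac : p • (a * (a * c)) = 0 := by
      rw [← mul_assoc]
      simpa [hJ4] using nsmul_mem_jacobsonPow_succ hker (mul_mem_jacobsonPow_three ha ha hc)
    rw [mul_add, mul_smul_comm, mul_smul_comm, ← mul_assoc a b, hab, zero_mul, smul_zero,
      zero_add, mul_nsmul, hpaac, smul_zero] at haca
    exact href.mul_eq_zero_comm_of_mem_jacobsonPow_two hker hJ4 (mul_mem_jacobsonPow_two ha hc) ha
      (by rw [mul_assoc, haca])
  obtain ⟨m, n, hcb⟩ := hspan (mul_mem_jacobsonPow_two hc hb)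
  have hacb' := mul_eq_mul_of_sub_mem_jacobsonPow hJ4 ha hcb
  rw [mul_add, mul_smul_comm, mul_smul_comm, haac, ← mul_assoc a b, hab, zero_mul, smul_zero,
    smul_zero, add_zero, ← mul_assoc] at hacb'
  exact hacb hacb'

theorem finite_local_reflexive_dim2_le_two_j4_zero_semicommutative_general
    (R : Type*) [Ring R] [Finite R] [IsLocalRing R] (href : IsReflexiveRing R)
    (p : ℕ) (hp : p.Prime) (f : R →+* ZMod p)
    (hker : RingHom.ker f = Ideal.jacobson (⊥ : Ideal R))
    (h2 : ∃ d ≤ 2, jacobsonFactorDim R p 2 d) (hJ4 : jacobsonPow R 4 = ⊥) :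
    IsSemicommutativeRing R := by
  have : Fact p.Prime := ⟨hp⟩
  intro a b hab
  by_cases ha : a ∈ (⊥ : Ideal R).jacobson
  · by_cases hb : b ∈ (⊥ : Ideal R).jacobson
    · exact mul_mul_eq_zero_of_forall_mem_jacobson hker hab fun c hc =>
        href.mul_mul_eq_zero_of_mem_jacobson hker h2 hJ4 ha hb hc hab
    · intro r
      rw [((isUnit_of_notMem_jacobson hb).mul_left_eq_zero).1 hab, zero_mul, zero_mul]
  · intro r
    rw [((isUnit_of_notMem_jacobson ha).mul_right_eq_zero).1 hab, mul_zero]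

theorem finite_local_reflexive_dim2_le_two_j4_zero_semicommutative
    (R : Type*) [Ring R] [Finite R] [IsLocalRing R] (href : IsReflexiveRing R)
    (p : ℕ) (hp : p.Prime) (f : R →+* ZMod p) (hf : Function.Surjective f)
    (hker : RingHom.ker f = Ideal.jacobson (⊥ : Ideal R))
    (h2 : ∃ d ≤ 2, jacobsonFactorDim R p 2 d) (hJ4 : jacobsonPow R 4 = ⊥) :
    IsSemicommutativeRing R :=
  finite_local_reflexive_dim2_le_two_j4_zero_semicommutative_general R href p hp f hker h2 hJ4
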